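/- Let p be a prime and let k, m be natural numbers with m ≤ k. The number of m-dimensional subspaces of the vector space (ℤ/pℤ)^k over the field ℤ/pℤ satisfies N · ∏_{i=1}^{m} (p^i − 1) = ∏_{i=1}^{m} (p^{k−i+1} − 1), where N is the cardinality of the set of ℤ/pℤ-submodules of (ℤ/pℤ)^k of finite rank m. (Equivalently, N is the Gaussian binomial coefficient binom(k,m)_p.) -/

import Mathlib

/-!
Double counting of linearly independent `m`-tuples in an `n`-dimensional space over a finite field
with `q` elements: there are `∏_{i<m} (q^n - q^i)` of them, and grouping them by their span, each
`m`-dimensional subspace is spanned by exactly its `∏_{i<m} (q^m - q^i)` bases. Since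
`q^n - q^i = q^i (q^(n-i) - 1)`, cancelling the common factor `q^(0 + ⋯ + (m-1))` leaves the
Gaussian binomial identity.
-/

open Finset Module Submodule

theorem Nat.card_eq_card_mul_of_card_fiber {α β : Type*} [Finite α] [Finite β] (f : α → β)
    {c : ℕ} (hc : ∀ b, Nat.card {a // f a = b} = c) : Nat.card α = Nat.card β * c := by
  have := Fintype.ofFinite β
  rw [Nat.card_congr (Equiv.sigmaFiberEquiv f).symm, Nat.card_sigma]
  simp [hc, Nat.card_eq_fintype_card]

theorem Finset.prod_Icc_one_reflect {M : Type*} [CommMonoid M] (f : ℕ → M) (m : ℕ) :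
    ∏ i ∈ Icc 1 m, f (m - i + 1) = ∏ i ∈ Icc 1 m, f i := by
  refine prod_nbij' (fun i ↦ m - i + 1) (fun i ↦ m - i + 1) ?_ ?_ ?_ ?_ fun _ _ ↦ rfl <;>
    intro i hi <;> simp only [mem_Icc] at hi ⊢ <;> omega

theorem Nat.prod_range_pow_sub_pow (q : ℕ) {n m : ℕ} (hm : m ≤ n) :
    ∏ i ∈ range m, (q ^ n - q ^ i) =
      q ^ (∑ i ∈ range m, i) * ∏ i ∈ Icc 1 m, (q ^ (n - i + 1) - 1) := by
  induction m with
  | zero => simp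
  | succ m ih =>
    have hfactor : q ^ n - q ^ m = q ^ m * (q ^ (n - m) - 1) := by
      rw [Nat.mul_sub_one, ← pow_add, Nat.add_sub_cancel' (by omega)]
    rw [prod_range_succ, sum_range_succ, prod_Icc_succ_top (by omega), ih (by omega), hfactor,
      show n - (m + 1) + 1 = n - m by omega, pow_add]
    ring

section SpanOfLinearIndependent

variable (K : Type*) {V : Type*} [DivisionRing K] [AddCommGroup V] [Module K V] (m : ℕ)

noncomputable def spanOfLinearIndependent (s : {s : Fin m → V // LinearIndependent K s}) :
    {W : Submodule K V // finrank K W = m} :=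
  ⟨span K (Set.range s.1), by rw [finrank_span_eq_card s.2, Fintype.card_fin]⟩

noncomputable def spanOfLinearIndependentFiberEquiv [FiniteDimensional K V]
    (W : {W : Submodule K V // finrank K W = m}) :
    {s // spanOfLinearIndependent K m s = W} ≃ {t : Fin m → W.1 // LinearIndependent K t} where
  toFun s := ⟨fun i ↦ ⟨s.1.1 i, congrArg Subtype.val s.2 ▸ subset_span (Set.mem_range_self i)⟩,
    LinearIndependent.of_comp W.1.subtype s.1.2⟩
  invFun t := ⟨⟨W.1.subtype ∘ t.1, t.2.map' W.1.subtype W.1.ker_subtype⟩, Subtype.ext <| by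
    change span K (Set.range (W.1.subtype ∘ t.1)) = W.1
    rw [Set.range_comp, ← map_span,
      t.2.span_eq_top_of_card_eq_finrank' (by rw [Fintype.card_fin, W.2]), map_subtype_top]⟩
  left_inv _ := rfl
  right_inv _ := rfl

variable [Fintype K] [Finite V]

theorem card_linearIndependent_eq_card_submodule_mul :
    Nat.card {s : Fin m → V // LinearIndependent K s} =
      Nat.card {W : Submodule K V // finrank K W = m} *
        ∏ i : Fin m, (Fintype.card K ^ m - Fintype.card K ^ i.val) :=
  Nat.card_eq_card_mul_of_card_fiber (spanOfLinearIndependent K m) fun W ↦ by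
    rw [Nat.card_congr (spanOfLinearIndependentFiberEquiv K m W),
      card_linearIndependent W.2.ge, W.2]

theorem card_submodule_finrank_mul_prod (hm : m ≤ finrank K V) :
    Nat.card {W : Submodule K V // finrank K W = m} *
        ∏ i ∈ Icc 1 m, (Fintype.card K ^ i - 1) =
      ∏ i ∈ Icc 1 m, (Fintype.card K ^ (finrank K V - i + 1) - 1) := by
  set q := Fintype.card K
  have hcount := card_linearIndependent_eq_card_submodule_mul K m (V := V)
  rw [card_linearIndependent hm, Fin.prod_univ_eq_prod_range (fun i ↦ q ^ finrank K V - q ^ i) m,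
    Fin.prod_univ_eq_prod_range (fun i ↦ q ^ m - q ^ i) m, Nat.prod_range_pow_sub_pow q hm,
    Nat.prod_range_pow_sub_pow q le_rfl, prod_Icc_one_reflect (fun i ↦ q ^ i - 1)] at hcount
  refine Nat.eq_of_mul_eq_mul_left (pow_pos (Fintype.card_pos (α := K)) (∑ i ∈ range m, i)) ?_
  rw [hcount]
  ring

end SpanOfLinearIndependent

/-- For a prime `p` and `m ≤ k`, the number `N` of `m`-dimensional
subspaces (i.e. `ZMod p`-submodules of finite rank `m`) of `(ZMod p)^k` satisfies
`N * ∏_{i=1}^m (p^i - 1) = ∏_{i=1}^m (p^(k-i+1) - 1)`. -/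
theorem count_subspaces_gaussian (p k m : ℕ) (hp : p.Prime) (hm : m ≤ k) :
    Nat.card {W : Submodule (ZMod p) (Fin k → ZMod p) //
        Module.finrank (ZMod p) W = m} *
      ∏ i ∈ Finset.Icc 1 m, (p ^ i - 1) =
      ∏ i ∈ Finset.Icc 1 m, (p ^ (k - i + 1) - 1) := by
  have : Fact p.Prime := ⟨hp⟩
  have hk : finrank (ZMod p) (Fin k → ZMod p) = k := by simp
  have hcount := card_submodule_finrank_mul_prod (ZMod p) m (V := Fin k → ZMod p) (by rwa [hk])
  rwa [ZMod.card, hk] at hcount
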